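/- For all indices i, j, k, ℓ ∈ {1, …, M}, the covariance of the Monte-Carlo weight estimators satisfies Cov(γ̂²_{ij}, γ̂²_{kℓ}) = E[γ̂²_{ij} γ̂²_{kℓ}] − γ²_{ij} γ²_{kℓ} = (1/N) { V[ε_{11}²] Σ_{p=1}^n W_{ip} W_{jp} W_{kp} W_{ℓp} + E[ε_{11}²]² Σ_{p≠q} W_{ip} W_{jq} W_{kp} W_{ℓq} + E[ε_{11}²]² Σ_{p≠q} W_{ip} W_{jq} W_{kq} W_{ℓp} }, where γ²_{ij} = Σ_{p=1}^n W_{ip} W_{jp} and sums indexed by p≠q range over ordered pairs of distinct indices in {1, …, n}. -/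

import Mathlib

/-!
Each `γ̂²_{ij}` averages over the `N` columns `a` products of two linear forms
`∑ p, W i p * ε (p, a)` in the i.i.d. family `ε`, so `E[γ̂²_{ij} γ̂²_{kℓ}]` only involves the
mixed fourth moments of `ε`. By independence (a factor that occurs exactly once has mean zero and
splits off), `E[ε_x ε_y ε_z ε_w] = δ_xy δ_zw + δ_xz δ_yw + δ_xw δ_yz + (E[ε⁴] - 3) δ_xyzw`.
The pairing `δ_xy δ_zw` contributes `γ²_{ij} γ²_{kℓ}` for each of the `N²` pairs of columns,
while the other terms need both columns to coincide, so only `N` pairs contribute them: this is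
the factor `1/N`. Finally `V[ε²] = E[ε⁴] - 1`.
-/

open MeasureTheory ProbabilityTheory Finset Matrix

section Moments

variable {Ω : Type*} [MeasurableSpace Ω] {μ : Measure Ω}

theorem MeasureTheory.MemLp.integrable_mul_mul_mul {f g h k : Ω → ℝ} (hf : MemLp f 4 μ)
    (hg : MemLp g 4 μ) (hh : MemLp h 4 μ) (hk : MemLp k 4 μ) :
    Integrable (fun ω => f ω * g ω * h ω * k ω) μ := by
  have hprod := MemLp.prod' (s := univ) (f := ![f, g, h, k]) (p := fun _ => 4) fun i _ => by
    fin_cases i <;> assumption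
  rw [← memLp_one_iff_integrable]
  convert hprod using 1
  · ext ω; simp [Fin.prod_univ_four]
  · simp [ENNReal.mul_inv_cancel]

theorem variance_sq_eq_sub [IsProbabilityMeasure μ] {X : Ω → ℝ} (h : MemLp X 4 μ) :
    variance (fun ω => X ω ^ 2) μ = ∫ ω, X ω ^ 4 ∂μ - (∫ ω, X ω ^ 2 ∂μ) ^ 2 := by
  have hX2 : MemLp (fun ω => X ω ^ 2) 2 μ :=
    (memLp_two_iff_integrable_sq (h.1.pow 2)).2 <| by
      simpa [← pow_mul, (by decide : Even 4).pow_abs] using h.integrable_norm_pow four_ne_zero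
  rw [variance_eq_sub hX2]
  simp [← pow_mul]

variable {κ : Type*} {e : κ → Ω → ℝ}

theorem ProbabilityTheory.iIndepFun.integral_mul_mul_mul_eq_zero (hindep : iIndepFun e μ)
    (hmeas : ∀ w, Measurable (e w)) {w x y z : κ} (hw : ∫ ω, e w ω ∂μ = 0) (hx : w ≠ x)
    (hy : w ≠ y) (hz : w ≠ z) :
    ∫ ω, e x ω * e y ω * e z ω * e w ω ∂μ = 0 := by
  classical
  have hST : Disjoint ({x, y, z} : Finset κ) {w} := by simpa using ⟨hx, hy, hz⟩
  have h := (hindep.indepFun_finset _ _ hST hmeas).comp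
    (φ := fun v : ({x, y, z} : Finset κ) → ℝ => v ⟨x, by simp⟩ * v ⟨y, by simp⟩ * v ⟨z, by simp⟩)
    (ψ := fun v : ({w} : Finset κ) → ℝ => v ⟨w, by simp⟩) (by fun_prop)
    (measurable_pi_apply (X := fun _ : ({w} : Finset κ) => ℝ) _)
  simpa [hw] using h.integral_fun_mul_eq_mul_integral (by fun_prop) (by fun_prop)

theorem ProbabilityTheory.iIndepFun.integral_mul_self_mul_mul_self (hindep : iIndepFun e μ)
    (hmeas : ∀ w, Measurable (e w)) {x y : κ} (hxy : x ≠ y) :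
    ∫ ω, e x ω * e x ω * (e y ω * e y ω) ∂μ
      = (∫ ω, e x ω ^ 2 ∂μ) * ∫ ω, e y ω ^ 2 ∂μ := by
  have h := hindep.indepFun_mul_mul hmeas x x y y hxy hxy hxy hxy
  simpa [sq] using h.integral_fun_mul_eq_mul_integral (by fun_prop) (by fun_prop)

theorem ProbabilityTheory.iIndepFun.integral_mul_mul_mul_eq [DecidableEq κ] (hindep : iIndepFun e μ)
    (hmeas : ∀ w, Measurable (e w)) (hmean : ∀ w, ∫ ω, e w ω ∂μ = 0)
    (hvar : ∀ w, ∫ ω, e w ω ^ 2 ∂μ = 1) {m₄ : ℝ} (h4 : ∀ w, ∫ ω, e w ω ^ 4 ∂μ = m₄)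
    (p q r s : κ) :
    ∫ ω, e p ω * e q ω * e r ω * e s ω ∂μ =
      (if p = q ∧ r = s then 1 else 0) + (if p = r ∧ q = s then 1 else 0)
        + (if p = s ∧ q = r then 1 else 0) + if p = q ∧ q = r ∧ r = s then m₄ - 3 else 0 := by
  have hzero {w x y z : κ} (hx : w ≠ x) (hy : w ≠ y) (hz : w ≠ z) :
      ∫ ω, e x ω * e y ω * e z ω * e w ω ∂μ = 0 :=
    hindep.integral_mul_mul_mul_eq_zero hmeas (hmean w) hx hy hz
  have hpair {x y : κ} (hxy : x ≠ y) : ∫ ω, e x ω * e x ω * (e y ω * e y ω) ∂μ = 1 := by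
    rw [hindep.integral_mul_self_mul_mul_self hmeas hxy, hvar, hvar, one_mul]
  rcases eq_or_ne p q with rfl | hpq
  · rcases eq_or_ne r s with rfl | hrs
    · rcases eq_or_ne p r with rfl | hpr
      · exact (integral_congr_ae (.of_forall fun ω => by ring)).trans <| (h4 p).trans <| by
          simp only [and_self, if_true]; ring
      · exact (integral_congr_ae (.of_forall fun ω => by ring)).trans <| (hpair hpr).trans <| by
          simp [hpr]
    · rcases eq_or_ne r p with rfl | hrp
      · exact (hzero hrs.symm hrs.symm hrs.symm).trans <| by simp [hrs]
      · exact (integral_congr_ae (.of_forall fun ω => by ring)).trans <|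
          (hzero hrp hrp hrs).trans <| by simp [hrs, hrp.symm]
  · rcases eq_or_ne p r with rfl | hpr
    · rcases eq_or_ne q s with rfl | hqs
      · exact (integral_congr_ae (.of_forall fun ω => by ring)).trans <| (hpair hpq).trans <| by
          simp [hpq]
      · exact (integral_congr_ae (.of_forall fun ω => by ring)).trans <|
          (hzero hpq.symm hpq.symm hqs).trans <| by simp [hpq, hpq.symm, hqs]
    · rcases eq_or_ne p s with rfl | hps
      · rcases eq_or_ne q r with rfl | hqr
        · exact (integral_congr_ae (.of_forall fun ω => by ring)).trans <| (hpair hpq).trans <| by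
            simp [hpq]
        · exact (integral_congr_ae (.of_forall fun ω => by ring)).trans <|
            (hzero hpq.symm hqr hpq.symm).trans <| by simp [hpq, hpr, hqr]
      · exact (integral_congr_ae (.of_forall fun ω => by ring)).trans <|
          (hzero hpq hpr hps).trans <| by simp [hpq, hpr, hps]

theorem memLp_dotProduct [Fintype κ] {p : ENNReal} (he : ∀ w, MemLp (e w) p μ) (u : κ → ℝ) :
    MemLp (fun ω => u ⬝ᵥ (e · ω)) p μ :=
  memLp_finsetSum _ fun w _ => (he w).const_mul (u w)

theorem ProbabilityTheory.iIndepFun.integral_dotProduct_mul_mul_mul [Fintype κ] [DecidableEq κ]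
    (hindep : iIndepFun e μ) (hmeas : ∀ w, Measurable (e w)) (hL4 : ∀ w, MemLp (e w) 4 μ)
    (hmean : ∀ w, ∫ ω, e w ω ∂μ = 0) (hvar : ∀ w, ∫ ω, e w ω ^ 2 ∂μ = 1) {m₄ : ℝ}
    (h4 : ∀ w, ∫ ω, e w ω ^ 4 ∂μ = m₄) (u v x y : κ → ℝ) :
    ∫ ω, (u ⬝ᵥ (e · ω)) * (v ⬝ᵥ (e · ω)) * (x ⬝ᵥ (e · ω)) * (y ⬝ᵥ (e · ω)) ∂μ
      = (u ⬝ᵥ v) * (x ⬝ᵥ y) + (u ⬝ᵥ x) * (v ⬝ᵥ y) + (u ⬝ᵥ y) * (v ⬝ᵥ x)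
        + (m₄ - 3) * ∑ p, u p * v p * x p * y p := by
  have hexpand (ω : Ω) : (u ⬝ᵥ (e · ω)) * (v ⬝ᵥ (e · ω)) * (x ⬝ᵥ (e · ω)) * (y ⬝ᵥ (e · ω))
      = ∑ p, ∑ q, ∑ r, ∑ s, u p * v q * x r * y s * (e p ω * e q ω * e r ω * e s ω) := by
    -- reversed because `simp` pulls the sum of the last factor outermost
    rw [show ∀ a b c d : ℝ, a * b * c * d = d * c * b * a from fun _ _ _ _ => by ring]
    simp only [dotProduct, sum_mul, mul_sum]
    exact sum_congr rfl fun p _ => sum_congr rfl fun q _ => sum_congr rfl fun r _ =>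
      sum_congr rfl fun s _ => by ring
  have hint (p q r s : κ) : Integrable (fun ω => e p ω * e q ω * e r ω * e s ω) μ :=
    (hL4 p).integrable_mul_mul_mul (hL4 q) (hL4 r) (hL4 s)
  simp_rw [hexpand]
  simp (disch := fun_prop) only [integral_finsetSum, integral_const_mul]
  simp only [hindep.integral_mul_mul_mul_eq hmeas hmean hvar h4, mul_add, sum_add_distrib,
    ite_and, mul_ite, mul_one, mul_zero, sum_ite_irrel, sum_const_zero, sum_ite_eq, mem_univ,
    if_true]
  simp only [dotProduct, sum_mul_sum, mul_sum (a := m₄ - 3)]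
  ac_rfl

end Moments

theorem sum_sum_ite_eq_zero_eq_sub {α R : Type*} [Fintype α] [DecidableEq α] [AddCommGroup R]
    (f : α → α → R) :
    ∑ p, ∑ q, (if p = q then 0 else f p q) = ∑ p, ∑ q, f p q - ∑ p, f p p := by
  rw [← sum_sub_distrib]
  refine sum_congr rfl fun p _ => ?_
  rw [← Fintype.sum_ite_eq p (f p), ← sum_sub_distrib]
  exact sum_congr rfl fun q _ => by split_ifs <;> simp_all

/-- Writes `∑ p, w p * ε (p, a)` as the linear form `inColumn w a ⬝ᵥ ε` in the whole family. -/
def inColumn {ι β : Type*} [DecidableEq β] (w : ι → ℝ) (a : β) : ι × β → ℝ :=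
  fun pc => if pc.2 = a then w pc.1 else 0

section Columns

variable {ι β : Type*} [Fintype ι] [Fintype β] [DecidableEq β]

theorem inColumn_dotProduct (w : ι → ℝ) (a : β) (f : ι × β → ℝ) :
    inColumn w a ⬝ᵥ f = ∑ p, w p * f (p, a) := by
  simp [inColumn, dotProduct, Fintype.sum_prod_type, ite_mul]

theorem inColumn_dotProduct_inColumn (w w' : ι → ℝ) (a b : β) :
    inColumn w a ⬝ᵥ inColumn w' b = if a = b then w ⬝ᵥ w' else 0 := by
  rw [inColumn_dotProduct]
  simp [inColumn, dotProduct, mul_ite, sum_ite_irrel]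

theorem sum_inColumn_mul_mul_mul (u v x y : ι → ℝ) (a b : β) :
    ∑ pc, inColumn u a pc * inColumn v a pc * inColumn x b pc * inColumn y b pc
      = if a = b then ∑ p, u p * v p * x p * y p else 0 := by
  rw [Fintype.sum_prod_type_right]
  by_cases hab : a = b
  · subst hab; simp [inColumn]
  · simp [inColumn, hab, Ne.symm hab]

end Columns

/-- `mcEstimate ε (W i) (W j)` is the estimator `γ̂²_{ij}`, with `ε (p, a) = ε_{pa}`. -/
noncomputable def mcEstimate {Ω ι : Type*} [Fintype ι] {N : ℕ} (ε : ι × Fin N → Ω → ℝ)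
    (u v : ι → ℝ) (ω : Ω) : ℝ :=
  (N : ℝ)⁻¹ * ∑ a : Fin N, (∑ p, u p * ε (p, a) ω) * (∑ p, v p * ε (p, a) ω)

section Estimator

variable {Ω ι : Type*} [MeasurableSpace Ω] {μ : Measure Ω} [Fintype ι] {N : ℕ}

theorem integral_mcEstimate_mul_mcEstimate [DecidableEq ι] (hN : N ≠ 0)
    {ε : ι × Fin N → Ω → ℝ} (hindep : iIndepFun ε μ) (hmeas : ∀ pa, Measurable (ε pa))
    (hL4 : ∀ pa, MemLp (ε pa) 4 μ) (hmean : ∀ pa, ∫ ω, ε pa ω ∂μ = 0)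
    (hvar : ∀ pa, ∫ ω, ε pa ω ^ 2 ∂μ = 1) {m₄ : ℝ} (h4 : ∀ pa, ∫ ω, ε pa ω ^ 4 ∂μ = m₄)
    (u v x y : ι → ℝ) :
    ∫ ω, mcEstimate ε u v ω * mcEstimate ε x y ω ∂μ
      = (u ⬝ᵥ v) * (x ⬝ᵥ y) + (N : ℝ)⁻¹ * ((u ⬝ᵥ x) * (v ⬝ᵥ y) + (u ⬝ᵥ y) * (v ⬝ᵥ x)
          + (m₄ - 3) * ∑ p, u p * v p * x p * y p) := by
  have hform (w : ι → ℝ) (a : Fin N) (ω : Ω) :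
      ∑ p, w p * ε (p, a) ω = inColumn w a ⬝ᵥ (ε · ω) :=
    (inColumn_dotProduct w a (ε · ω)).symm
  have hprod (ω : Ω) : mcEstimate ε u v ω * mcEstimate ε x y ω
      = (N : ℝ)⁻¹ * ((N : ℝ)⁻¹ * ∑ a, ∑ b, (inColumn u a ⬝ᵥ (ε · ω)) * (inColumn v a ⬝ᵥ (ε · ω))
          * (inColumn x b ⬝ᵥ (ε · ω)) * (inColumn y b ⬝ᵥ (ε · ω))) := by
    rw [mcEstimate, mcEstimate, mul_mul_mul_comm, sum_mul_sum]
    simp only [hform, mul_assoc]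
  have hint (a b : Fin N) : Integrable (fun ω => (inColumn u a ⬝ᵥ (ε · ω))
      * (inColumn v a ⬝ᵥ (ε · ω)) * (inColumn x b ⬝ᵥ (ε · ω)) * (inColumn y b ⬝ᵥ (ε · ω))) μ :=
    (memLp_dotProduct hL4 _).integrable_mul_mul_mul (memLp_dotProduct hL4 _)
      (memLp_dotProduct hL4 _) (memLp_dotProduct hL4 _)
  simp_rw [hprod]
  simp (disch := fun_prop) only [integral_const_mul, integral_finsetSum]
  simp only [hindep.integral_dotProduct_mul_mul_mul hmeas hL4 hmean hvar h4,
    inColumn_dotProduct_inColumn, sum_inColumn_mul_mul_mul]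
  simp only [if_true, mul_ite, mul_zero, sum_add_distrib,
    sum_const, sum_ite_eq, mem_univ, card_univ, Fintype.card_fin, nsmul_eq_mul]
  field_simp
  ring

end Estimator

/-- Covariance of the Monte-Carlo weight estimators:
`Cov(γ̂²_{ij}, γ̂²_{kℓ}) = E[γ̂²_{ij} γ̂²_{kℓ}] − γ²_{ij} γ²_{kℓ}
  = (1/N) { V[ε₁₁²] ∑_p W_{ip} W_{jp} W_{kp} W_{ℓp}
    + E[ε₁₁²]² ∑_{p≠q} W_{ip} W_{jq} W_{kp} W_{ℓq}
    + E[ε₁₁²]² ∑_{p≠q} W_{ip} W_{jq} W_{kq} W_{ℓp} }`, where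
`γ²_{ij} = ∑_p W_{ip} W_{jp}`. -/
theorem mc_weight_estimator_covariance
    {Ω : Type*} [MeasurableSpace Ω] (μ : Measure Ω) [IsProbabilityMeasure μ]
    {M n N : ℕ} (hn : 0 < n) (hN : 0 < N)
    (W : Matrix (Fin M) (Fin n) ℝ)
    (ε : Fin n × Fin N → Ω → ℝ)
    (hmeas : ∀ pk, Measurable (ε pk))
    (hindep : iIndepFun ε μ)
    (hident : ∀ pk qk, IdentDistrib (ε pk) (ε qk) μ μ)
    (hL4 : ∀ pk, MemLp (ε pk) 4 μ)
    (hmean : ∀ pk, ∫ ω, ε pk ω ∂μ = 0)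
    (hvar : ∀ pk, ∫ ω, (ε pk ω) ^ 2 ∂μ = 1)
    (i j k l : Fin M) :
    (∫ ω,
        ((N : ℝ)⁻¹ * ∑ a : Fin N,
            (∑ p : Fin n, W i p * ε (p, a) ω) * (∑ p : Fin n, W j p * ε (p, a) ω)) *
        ((N : ℝ)⁻¹ * ∑ b : Fin N,
            (∑ p : Fin n, W k p * ε (p, b) ω) * (∑ p : Fin n, W l p * ε (p, b) ω)) ∂μ)
      - (∑ p : Fin n, W i p * W j p) * (∑ p : Fin n, W k p * W l p)
      = (N : ℝ)⁻¹ *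
          (variance (fun ω => (ε (⟨0, hn⟩, ⟨0, hN⟩) ω) ^ 2) μ *
              ∑ p : Fin n, W i p * W j p * W k p * W l p
            + (∫ ω, (ε (⟨0, hn⟩, ⟨0, hN⟩) ω) ^ 2 ∂μ) ^ 2 *
                ∑ p : Fin n, ∑ q : Fin n,
                  (if p = q then 0 else W i p * W j q * W k p * W l q)
            + (∫ ω, (ε (⟨0, hn⟩, ⟨0, hN⟩) ω) ^ 2 ∂μ) ^ 2 *
                ∑ p : Fin n, ∑ q : Fin n,
                  (if p = q then 0 else W i p * W j q * W k q * W l p)) := by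
  set e₀ : Fin n × Fin N := (⟨0, hn⟩, ⟨0, hN⟩)
  have h4 (pk : Fin n × Fin N) : ∫ ω, ε pk ω ^ 4 ∂μ = ∫ ω, ε e₀ ω ^ 4 ∂μ :=
    ((hident pk e₀).comp (measurable_id.pow_const 4)).integral_eq
  have hcov := integral_mcEstimate_mul_mcEstimate hN.ne' hindep hmeas hL4 hmean hvar h4
    (W i) (W j) (W k) (W l)
  unfold mcEstimate at hcov
  have hik : ∑ p, ∑ q, W i p * W j q * W k p * W l q = (W i ⬝ᵥ W k) * (W j ⬝ᵥ W l) := by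
    simp only [dotProduct, sum_mul_sum]; ac_rfl
  have hil : ∑ p, ∑ q, W i p * W j q * W k q * W l p = (W i ⬝ᵥ W l) * (W j ⬝ᵥ W k) := by
    simp only [dotProduct, sum_mul_sum]; ac_rfl
  rw [hcov, variance_sq_eq_sub (hL4 e₀), hvar, sum_sum_ite_eq_zero_eq_sub,
    sum_sum_ite_eq_zero_eq_sub, hik, hil]
  simp only [dotProduct]
  ring
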